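/- If e : ℝ → ℝ is continuously differentiable, c > 0, and s(t) = c·e(t) + ė(t) → 0 as t → ∞ with s bounded, then e(t) → 0 as t → ∞. -/

import Mathlib

open Filter

theorem error_tendsto_zero_of_sliding_tendsto_zero (e : ℝ → ℝ) (c : ℝ) (hc : 0 < c)
    (he : ContDiff ℝ 1 e)
    (hbound : ∃ M : ℝ, ∀ t, |c * e t + deriv e t| ≤ M)
    (hs : Tendsto (fun t => c * e t + deriv e t) atTop (nhds 0)) :
    Tendsto e atTop (nhds 0) := by
  set s : ℝ → ℝ := fun t => c * e t + deriv e t with hsdef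
  have hde : ∀ t, HasDerivAt e (deriv e t) t := fun t =>
    ((he.differentiable one_ne_zero) t).hasDerivAt
  set f : ℝ → ℝ := fun t => Real.exp (c * t) * e t with hfdef
  have hexp : ∀ t : ℝ, HasDerivAt (fun t => Real.exp (c * t)) (c * Real.exp (c * t)) t := by
    intro t
    have := (Real.hasDerivAt_exp (c * t)).comp t ((hasDerivAt_id t).const_mul c)
    exact this.congr_deriv (by ring)
  have hf : ∀ t, HasDerivAt f (Real.exp (c * t) * s t) t := by
    intro t
    have := (hexp t).mul (hde t)
    refine this.congr_deriv ?_
    show _ = Real.exp (c * t) * (c * e t + deriv e t)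
    ring
  rw [NormedAddCommGroup.tendsto_nhds_zero]
  intro ε hε
  have hε2 : 0 < c * (ε / 2) := by positivity
  have hev : ∀ᶠ t in atTop, |s t| < c * (ε / 2) := by
    have := (Metric.tendsto_nhds.mp hs) _ hε2
    simpa [Real.dist_eq] using this
  obtain ⟨T, hT⟩ := eventually_atTop.mp hev
  -- bound on |f t - f T| for t ≥ T
  have key : ∀ t ≥ T, |f t - f T| ≤ ε / 2 * Real.exp (c * t) := by
    intro t ht
    have mono : ∀ σ : ℝ, σ = 1 ∨ σ = -1 →
        MonotoneOn (fun x => ε / 2 * Real.exp (c * x) + σ * f x) (Set.Ici T) := by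
      intro σ hσ
      apply monotoneOn_of_hasDerivWithinAt_nonneg (f' := fun x =>
        ε / 2 * (c * Real.exp (c * x)) + σ * (Real.exp (c * x) * s x)) (convex_Ici T)
      · have hec : Continuous e := he.continuous
        have hx : Continuous fun x : ℝ => Real.exp (c * x) :=
          Real.continuous_exp.comp (continuous_const.mul continuous_id)
        exact ((continuous_const.mul hx).add (continuous_const.mul (hx.mul hec))).continuousOn
      · intro x hx
        exact (((hexp x).const_mul (ε / 2)).add ((hf x).const_mul σ)).hasDerivWithinAt
      · intro x hx
        rw [interior_Ici] at hx
        have hsx : |s x| ≤ c * (ε / 2) := (hT x hx.le).le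
        have h1 : -(σ * s x) ≤ c * (ε / 2) := by
          obtain ⟨ha, hb⟩ := abs_le.mp hsx
          rcases hσ with h | h <;> subst h <;> nlinarith
        have hexpx : 0 < Real.exp (c * x) := Real.exp_pos _
        have heq : ε / 2 * (c * Real.exp (c * x)) + σ * (Real.exp (c * x) * s x)
            = Real.exp (c * x) * (c * (ε / 2) - (- (σ * s x))) := by ring
        rw [heq]
        exact mul_nonneg hexpx.le (by linarith)
    have h1 := mono 1 (Or.inl rfl) (Set.self_mem_Ici) (Set.mem_Ici.mpr ht) ht
    have h2 := mono (-1) (Or.inr rfl) (Set.self_mem_Ici) (Set.mem_Ici.mpr ht) ht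
    simp only [one_mul, neg_one_mul] at h1 h2
    have hexpT : 0 < Real.exp (c * T) := Real.exp_pos _
    rw [abs_le]
    constructor <;> nlinarith
  -- now conclude
  have hfin : Tendsto (fun t => |f T| * Real.exp (-(c * t))) atTop (nhds 0) := by
    have : Tendsto (fun t => Real.exp (-(c * t))) atTop (nhds 0) := by
      apply Real.tendsto_exp_atBot.comp
      exact tendsto_neg_atTop_atBot.comp ((tendsto_const_mul_atTop_of_pos hc).mpr tendsto_id)
    simpa using this.const_mul |f T|
  have hev2 : ∀ᶠ t in atTop, |f T| * Real.exp (-(c * t)) < ε / 2 := by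
    have := (Metric.tendsto_nhds.mp hfin) _ (by positivity : (0:ℝ) < ε / 2)
    filter_upwards [this] with t ht
    rw [Real.dist_eq, sub_zero] at ht
    exact (le_abs_self _).trans_lt ht
  filter_upwards [hev2, eventually_ge_atTop T] with t ht2 htT
  have hkey := key t htT
  have hexpt : 0 < Real.exp (c * t) := Real.exp_pos _
  have hft : |f t| ≤ |f T| + ε / 2 * Real.exp (c * t) := by
    have := abs_sub_abs_le_abs_sub (f t) (f T)
    linarith
  have het : e t = f t * Real.exp (-(c * t)) := by
    simp only [hfdef, Real.exp_neg]
    field_simp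
  rw [Real.norm_eq_abs, het, abs_mul, abs_of_pos (Real.exp_pos _)]
  have hexpinv : Real.exp (-(c * t)) * Real.exp (c * t) = 1 := by
    rw [← Real.exp_add]; simp
  nlinarith [abs_nonneg (f T), Real.exp_pos (-(c * t)), abs_nonneg (f t)]
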